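/- Let H = (1/(2(1-ρ cos x)))·(sin²x·(Px² + Py²) + ξ) and S₋ = e^{-y}(-sin x·Px·Py + cos x·Py² - ρH) with ρ ∈ (0,1), ξ ∈ ℝ. Then {H, S₋} = 0 for the canonical Poisson bracket. -/

import Mathlib

/-- The canonical Poisson bracket on `T*(ℝ²)` with coordinates `(x, y, Px, Py)`. -/
noncomputable def poissonBracket (f g : ℝ → ℝ → ℝ → ℝ → ℝ) (x y px py : ℝ) : ℝ :=
    deriv (fun x' => f x' y px py) x * deriv (fun px' => g x y px' py) px
  + deriv (fun y' => f x y' px py) y * deriv (fun py' => g x y px py') py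
  - deriv (fun px' => f x y px' py) px * deriv (fun x' => g x' y px py) x
  - deriv (fun py' => f x y px py') py * deriv (fun y' => g x y' px py) y

/-- Trigonometric Koenigs Hamiltonian with potential:
`H = (sin²x·(Px²+Py²) + ξ)/(2(1-ρ cos x))`. -/
noncomputable def HtrigPot (ρ ξ x y px py : ℝ) : ℝ :=
  (Real.sin x ^ 2 * (px ^ 2 + py ^ 2) + ξ) / (2 * (1 - ρ * Real.cos x))

/-- The quadratic integral `S₋ = e^{-y}(-sin x·Px·Py + cos x·Py² - ρH)`. -/
noncomputable def Sminus (ρ ξ x y px py : ℝ) : ℝ :=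
  Real.exp (-y) *
    (-(Real.sin x) * px * py + Real.cos x * py ^ 2 - ρ * HtrigPot ρ ξ x y px py)

/-- For the trigonometric Koenigs system with potential, `{H, S₋} = 0`. -/
theorem stmt4 (ρ ξ : ℝ) (hρ : ρ ∈ Set.Ioo (0 : ℝ) 1) :
    ∀ x ∈ Set.Ioo (0 : ℝ) Real.pi, ∀ y px py : ℝ,
      poissonBracket (HtrigPot ρ ξ) (Sminus ρ ξ) x y px py = 0 := by
  obtain ⟨hρ0, hρ1⟩ := hρ
  intro x hx y px py
  have hD : 1 - ρ * Real.cos x ≠ 0 := by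
    have h1 : ρ * Real.cos x < 1 := by nlinarith [Real.cos_le_one x]
    linarith
  have hD2 : (2 : ℝ) * (1 - ρ * Real.cos x) ≠ 0 := by
    intro h; apply hD; linarith
  set dHx : ℝ := (2*Real.sin x*Real.cos x*(px^2+py^2)*(2*(1-ρ*Real.cos x))
      - (Real.sin x^2*(px^2+py^2)+ξ)*(2*(ρ*Real.sin x)))/(2*(1-ρ*Real.cos x))^2 with hdHx
  have hHx : HasDerivAt (fun x' => HtrigPot ρ ξ x' y px py) dHx x := by
    simp only [HtrigPot]
    have hN : HasDerivAt (fun x' => Real.sin x' ^ 2 * (px^2+py^2) + ξ)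
        (2*Real.sin x*Real.cos x*(px^2+py^2)) x := by
      have := (((Real.hasDerivAt_sin x).pow 2).mul_const (px^2+py^2)).add_const ξ
      exact this.congr_deriv (by ring)
    have hDen : HasDerivAt (fun x' => 2*(1 - ρ*Real.cos x')) (2*(ρ*Real.sin x)) x := by
      have := (((hasDerivAt_const x (1:ℝ)).sub ((Real.hasDerivAt_cos x).const_mul ρ)).const_mul 2)
      exact this.congr_deriv (by ring)
    have := hN.div hDen hD2
    exact this
  have hHpx : HasDerivAt (fun px' => HtrigPot ρ ξ x y px' py)
      (Real.sin x^2*(2*px)/(2*(1-ρ*Real.cos x))) px := by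
    simp only [HtrigPot]
    have := ((((hasDerivAt_pow 2 px).add_const (py^2)).const_mul (Real.sin x^2)).add_const ξ).div_const (2*(1-ρ*Real.cos x))
    exact this.congr_deriv (by ring)
  have hHpy : HasDerivAt (fun py' => HtrigPot ρ ξ x y px py')
      (Real.sin x^2*(2*py)/(2*(1-ρ*Real.cos x))) py := by
    simp only [HtrigPot]
    have := ((((hasDerivAt_pow 2 py).const_add (px^2)).const_mul (Real.sin x^2)).add_const ξ).div_const (2*(1-ρ*Real.cos x))
    exact this.congr_deriv (by ring)
  have hHy : deriv (fun y' => HtrigPot ρ ξ x y' px py) y = 0 := by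
    simp only [HtrigPot]; exact deriv_const y _
  have hSx : HasDerivAt (fun x' => Sminus ρ ξ x' y px py)
      (Real.exp (-y) * (-(Real.cos x)*px*py - Real.sin x*py^2 - ρ*dHx)) x := by
    simp only [Sminus]
    have h1 : HasDerivAt (fun x' => -(Real.sin x')*px*py + Real.cos x'*py^2
        - ρ*HtrigPot ρ ξ x' y px py)
        (-(Real.cos x)*px*py - Real.sin x*py^2 - ρ*dHx) x := by
      have := ((((Real.hasDerivAt_sin x).neg.mul_const px).mul_const py).add
        ((Real.hasDerivAt_cos x).mul_const (py^2))).sub (hHx.const_mul ρ)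
      exact this.congr_deriv (by ring)
    exact h1.const_mul _
  have hSy : HasDerivAt (fun y' => Sminus ρ ξ x y' px py)
      (-Real.exp (-y) * (-(Real.sin x)*px*py + Real.cos x*py^2 - ρ*HtrigPot ρ ξ x y px py)) y := by
    simp only [Sminus, HtrigPot]
    have hexp : HasDerivAt (fun y' => Real.exp (-y')) (-Real.exp (-y)) y := by
      exact ((Real.hasDerivAt_exp (-y)).comp y (hasDerivAt_neg y)).congr_deriv (by simp)
    exact hexp.mul_const _
  have hSpx : HasDerivAt (fun px' => Sminus ρ ξ x y px' py)
      (Real.exp (-y) * (-(Real.sin x)*py - ρ*(Real.sin x^2*(2*px)/(2*(1-ρ*Real.cos x))))) px := by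
    simp only [Sminus]
    have h1 : HasDerivAt (fun px' => -(Real.sin x)*px'*py + Real.cos x*py^2
        - ρ*HtrigPot ρ ξ x y px' py)
        (-(Real.sin x)*py - ρ*(Real.sin x^2*(2*px)/(2*(1-ρ*Real.cos x)))) px := by
      have := ((((hasDerivAt_id px).const_mul (-(Real.sin x))).mul_const py).add_const
        (Real.cos x*py^2)).sub (hHpx.const_mul ρ)
      exact this.congr_deriv (by ring)
    exact h1.const_mul _
  have hSpy : HasDerivAt (fun py' => Sminus ρ ξ x y px py')
      (Real.exp (-y) * (-(Real.sin x)*px + 2*Real.cos x*py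
        - ρ*(Real.sin x^2*(2*py)/(2*(1-ρ*Real.cos x))))) py := by
    simp only [Sminus]
    have h1 : HasDerivAt (fun py' => -(Real.sin x)*px*py' + Real.cos x*py'^2
        - ρ*HtrigPot ρ ξ x y px py')
        (-(Real.sin x)*px + 2*Real.cos x*py
          - ρ*(Real.sin x^2*(2*py)/(2*(1-ρ*Real.cos x)))) py := by
      have := (((hasDerivAt_id py).const_mul (-(Real.sin x)*px)).add
        ((hasDerivAt_pow 2 py).const_mul (Real.cos x))).sub (hHpy.const_mul ρ)
      exact this.congr_deriv (by ring)
    exact h1.const_mul _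
  unfold poissonBracket
  rw [hHx.deriv, hHpx.deriv, hHpy.deriv, hHy, hSx.deriv, hSpx.deriv, hSpy.deriv, hSy.deriv]
  simp only [HtrigPot, hdHx]
  have hsc : Real.sin x ^ 2 = 1 - Real.cos x ^ 2 := Real.sin_sq x
  have hD' : 1 - Real.cos x * ρ ≠ 0 := by rwa [mul_comm (Real.cos x) ρ]
  field_simp
  ring_nf
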